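/- There exist instances where the alternating algorithm returns a solution with objective value strictly below the average A(Q,c,d): for m = n ≥ 2, c = d = 0, Q with q_{11} = 1, q_{nn} = M for M > 3, and all other entries 0, the solution (x⁰, y⁰) with x⁰_1 = y⁰_1 = 1 and all other components 0 satisfies: y⁰ maximizes f(x⁰, ·) over {0,1}^n, x⁰ maximizes f(·, y⁰) over {0,1}^n, f(x⁰, y⁰) = 1, the maximum of f over all boolean pairs is M + 1, and A(Q,0,0) = (M+1)/4 > 1. -/

import Mathlib

/-! With `c = d = 0` the objective is `x₁y₁ + M xₙyₙ`. At `x = y = e₁` the term `M xₙyₙ` cannot be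
switched on by changing only one side, so `(e₁, e₁)` is a local optimum of value `1`, while the
global maximum is `M + 1`. Averaging over the cube, each coordinate `xᵢ` equals `1` on exactly half
of the boolean vectors (negating all coordinates pairs them off), so a bilinear form averages to a
quarter of the sum of its coefficients.
-/

open Finset

/-- The bipartite boolean quadratic objective f(x,y) = xᵀQy + c·x + d·y,
extended to real vectors. -/
noncomputable def fobj (m n : ℕ) (Q : Fin m → Fin n → ℝ) (c : Fin m → ℝ) (d : Fin n → ℝ)
    (x : Fin m → ℝ) (y : Fin n → ℝ) : ℝ :=
  (∑ i, ∑ j, Q i j * x i * y j) + (∑ i, c i * x i) + (∑ j, d j * y j)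

/-- A boolean vector viewed as a real 0-1 vector. -/
def bv {k : ℕ} (x : Fin k → Bool) : Fin k → ℝ := fun i => if x i then 1 else 0

/-- The average of f over all 2^(m+n) boolean pairs (x,y). -/
noncomputable def avgA (m n : ℕ) (Q : Fin m → Fin n → ℝ) (c : Fin m → ℝ) (d : Fin n → ℝ) : ℝ :=
  (∑ x : Fin m → Bool, ∑ y : Fin n → Bool, fobj m n Q c d (bv x) (bv y)) / 2 ^ (m + n)

lemma bv_nonneg {k : ℕ} (x : Fin k → Bool) (i : Fin k) : 0 ≤ bv x i := by
  unfold bv; split_ifs <;> norm_num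

lemma bv_le_one {k : ℕ} (x : Fin k → Bool) (i : Fin k) : bv x i ≤ 1 := by
  unfold bv; split_ifs <;> norm_num

lemma bv_add_bv_not {k : ℕ} (x : Fin k → Bool) (i : Fin k) :
    bv x i + bv (fun j => !x j) i = 1 := by
  cases h : x i <;> simp [bv, h]

lemma sum_bv_apply (k : ℕ) (i : Fin k) : ∑ x : Fin k → Bool, bv x i = 2 ^ k / 2 := by
  have hnot : ∑ x : Fin k → Bool, bv (fun j => !x j) i = ∑ x : Fin k → Bool, bv x i :=
    Fintype.sum_equiv (Equiv.piCongrRight fun _ => Equiv.boolNot) _ _ fun _ => rfl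
  have htotal : ∑ x : Fin k → Bool, (bv x i + bv (fun j => !x j) i) = 2 ^ k := by
    simp [bv_add_bv_not]
  rw [Finset.sum_add_distrib, hnot] at htotal
  linarith

lemma sum_sum_mul_bv (k : ℕ) (c : Fin k → ℝ) :
    ∑ x : Fin k → Bool, ∑ i, c i * bv x i = (∑ i, c i) * (2 ^ k / 2) := by
  rw [Finset.sum_comm, Finset.sum_mul]
  refine Finset.sum_congr rfl fun i _ => ?_
  rw [← Finset.mul_sum, sum_bv_apply]

lemma sum_sum_bilinear_bv (m n : ℕ) (Q : Fin m → Fin n → ℝ) :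
    ∑ x : Fin m → Bool, ∑ y : Fin n → Bool, ∑ i, ∑ j, Q i j * bv x i * bv y j
      = (∑ i, ∑ j, Q i j) * (2 ^ m / 2) * (2 ^ n / 2) := by
  have hy (x : Fin m → Bool) : ∑ y : Fin n → Bool, ∑ i, ∑ j, Q i j * bv x i * bv y j
      = (∑ i, (∑ j, Q i j) * bv x i) * (2 ^ n / 2) := by
    calc ∑ y : Fin n → Bool, ∑ i, ∑ j, Q i j * bv x i * bv y j
        = ∑ y : Fin n → Bool, ∑ j, (∑ i, Q i j * bv x i) * bv y j := by
          simp_rw [Finset.sum_mul, Finset.sum_comm (γ := Fin m)]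
      _ = (∑ j, ∑ i, Q i j * bv x i) * (2 ^ n / 2) := sum_sum_mul_bv n _
      _ = (∑ i, (∑ j, Q i j) * bv x i) * (2 ^ n / 2) := by
          simp_rw [Finset.sum_mul, Finset.sum_comm (γ := Fin n)]
  simp_rw [hy, ← Finset.sum_mul, sum_sum_mul_bv]

lemma avgA_eq (m n : ℕ) (Q : Fin m → Fin n → ℝ) (c : Fin m → ℝ) (d : Fin n → ℝ) :
    avgA m n Q c d = (∑ i, ∑ j, Q i j) / 4 + (∑ i, c i) / 2 + (∑ j, d j) / 2 := by
  have hc : ∑ x : Fin m → Bool, ∑ _y : Fin n → Bool, ∑ i, c i * bv x i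
      = (∑ i, c i) * (2 ^ m / 2) * 2 ^ n := by
    simp [← Finset.mul_sum, sum_sum_mul_bv, mul_comm]
  have hd : ∑ _x : Fin m → Bool, ∑ y : Fin n → Bool, ∑ j, d j * bv y j
      = 2 ^ m * ((∑ j, d j) * (2 ^ n / 2)) := by
    simp [sum_sum_mul_bv]
  simp only [avgA, fobj, Finset.sum_add_distrib, sum_sum_bilinear_bv, hc, hd]
  field_simp
  ring

lemma sum_sum_two_entries_mul {m n : ℕ} {p q : Fin m} {p' q' : Fin n} (hpq : ¬(p = q ∧ p' = q'))
    (a b : ℝ) (x : Fin m → ℝ) (y : Fin n → ℝ) :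
    ∑ i, ∑ j, (if i = p ∧ j = p' then a else if i = q ∧ j = q' then b else 0) * x i * y j
      = a * x p * y p' + b * x q * y q' := by
  have hsplit (i : Fin m) (j : Fin n) :
      (if i = p ∧ j = p' then a else if i = q ∧ j = q' then b else 0) * x i * y j
        = (if i = p then if j = p' then a * x i * y j else 0 else 0)
          + (if i = q then if j = q' then b * x i * y j else 0 else 0) := by
    split_ifs <;> simp_all
  simp_rw [hsplit, Finset.sum_add_distrib]
  simp

theorem alternating_algorithm_bad_local_opt (n : ℕ) (hn : 2 ≤ n) (M : ℝ) (hM : 3 < M)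
    (Q : Fin n → Fin n → ℝ)
    (hQ : Q = fun i j =>
      if i = (⟨0, by omega⟩ : Fin n) ∧ j = (⟨0, by omega⟩ : Fin n) then 1
      else if i = (⟨n - 1, by omega⟩ : Fin n) ∧ j = (⟨n - 1, by omega⟩ : Fin n) then M
      else 0)
    (x0 : Fin n → Bool) (hx0 : ∀ i, x0 i = true ↔ i = (⟨0, by omega⟩ : Fin n))
    (y0 : Fin n → Bool) (hy0 : ∀ j, y0 j = true ↔ j = (⟨0, by omega⟩ : Fin n)) :
    (∀ y : Fin n → Bool,
        fobj n n Q (fun _ => 0) (fun _ => 0) (bv x0) (bv y)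
          ≤ fobj n n Q (fun _ => 0) (fun _ => 0) (bv x0) (bv y0))
    ∧ (∀ x : Fin n → Bool,
        fobj n n Q (fun _ => 0) (fun _ => 0) (bv x) (bv y0)
          ≤ fobj n n Q (fun _ => 0) (fun _ => 0) (bv x0) (bv y0))
    ∧ fobj n n Q (fun _ => 0) (fun _ => 0) (bv x0) (bv y0) = 1
    ∧ IsGreatest {v : ℝ | ∃ (x : Fin n → Bool) (y : Fin n → Bool),
        v = fobj n n Q (fun _ => 0) (fun _ => 0) (bv x) (bv y)} (M + 1)
    ∧ avgA n n Q (fun _ => 0) (fun _ => 0) = (M + 1) / 4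
    ∧ 1 < (M + 1) / 4 := by
  set p : Fin n := ⟨0, by omega⟩
  set q : Fin n := ⟨n - 1, by omega⟩
  have hpq : p ≠ q := by simp [p, q, Fin.ext_iff]; omega
  have hentries : ¬(p = q ∧ p = q) := fun h => hpq h.1
  have hf (x y : Fin n → Bool) : fobj n n Q (fun _ => 0) (fun _ => 0) (bv x) (bv y)
      = bv x p * bv y p + M * bv x q * bv y q := by
    simp only [fobj, hQ, zero_mul, Finset.sum_const_zero, add_zero]
    rw [sum_sum_two_entries_mul hentries, one_mul]
  have hx0p : bv x0 p = 1 := by simp [bv, hx0]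
  have hy0p : bv y0 p = 1 := by simp [bv, hy0]
  have hx0q : bv x0 q = 0 := by simp [bv, hx0, hpq.symm]
  have hy0q : bv y0 q = 0 := by simp [bv, hy0, hpq.symm]
  have hval : fobj n n Q (fun _ => 0) (fun _ => 0) (bv x0) (bv y0) = 1 := by
    simp [hf, hx0p, hy0p, hx0q]
  refine ⟨fun y => ?_, fun x => ?_, hval, ⟨⟨fun _ => true, fun _ => true, ?_⟩, ?_⟩, ?_, by linarith⟩
  · simpa [hval, hf, hx0p, hx0q] using bv_le_one y p
  · simpa [hval, hf, hy0p, hy0q] using bv_le_one x p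
  · simp [hf, bv, add_comm]
  · rintro v ⟨x, y, rfl⟩
    have hp := mul_le_one₀ (bv_le_one x p) (bv_nonneg y p) (bv_le_one y p)
    have hq := mul_le_one₀ (bv_le_one x q) (bv_nonneg y q) (bv_le_one y q)
    rw [hf, mul_assoc]
    nlinarith
  · have hsum : ∑ i, ∑ j, Q i j = 1 + M := by
      simpa [hQ] using sum_sum_two_entries_mul hentries 1 M (fun _ => 1) (fun _ => 1)
    simp [avgA_eq, hsum, add_comm]
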